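/- In a hyperbolic conformal triangle datum, at every point of U and for all distinct i, j ∈ {1,2,3}: cosh(d_ji) · ∂γ_i/∂f_j = cosh(d_ij) · ∂γ_j/∂f_i. (This is the symmetry ∂γ_i/∂u_j = ∂γ_j/∂u_i of the angle derivatives after the change of variables u_i = u_i(f_i) of Theorem 1.4, expressed in the f-coordinates.) -/

import Mathlib

noncomputable section

/-- Partial derivative of `F` in the `k`-th coordinate direction at `x`. -/
def pd (k : Fin 3) (F : (Fin 3 → ℝ) → ℝ) (x : Fin 3 → ℝ) : ℝ :=
  fderiv ℝ F x (Pi.single k 1)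

/-- The edge length `ℓ_ij = d_ij + d_ji` determined by the partial edge lengths. -/
def len (d : Fin 3 → Fin 3 → (Fin 3 → ℝ) → ℝ) (i j : Fin 3) (x : Fin 3 → ℝ) : ℝ :=
  d i j x + d j i x

/-- The index complementary to `i` and `j` in `{0,1,2}` (for `i ≠ j`). -/
def other (i j : Fin 3) : Fin 3 := -(i + j)

/-- The angle `γ_i` of the hyperbolic triangle with side lengths `ℓ_ab`, defined by the
hyperbolic law of cosines
`cos γ_i = (cosh ℓ_ij cosh ℓ_ik − cosh ℓ_jk)/(sinh ℓ_ij sinh ℓ_ik)`. -/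
def hGamma (d : Fin 3 → Fin 3 → (Fin 3 → ℝ) → ℝ) (i : Fin 3) (x : Fin 3 → ℝ) : ℝ :=
  Real.arccos ((Real.cosh (len d i (i+1) x) * Real.cosh (len d i (i+2) x)
      - Real.cosh (len d (i+1) (i+2) x)) /
    (Real.sinh (len d i (i+1) x) * Real.sinh (len d i (i+2) x)))

/-- The height factor `T_ij = cosh d_ij (tanh d_ik − tanh d_ij cos γ_i)/sin γ_i`
(geometrically `tanh^β h_ij`). -/
def hT (d : Fin 3 → Fin 3 → (Fin 3 → ℝ) → ℝ) (i j : Fin 3) (x : Fin 3 → ℝ) : ℝ :=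
  Real.cosh (d i j x) * (Real.tanh (d i (other i j) x)
      - Real.tanh (d i j x) * Real.cos (hGamma d i x)) / Real.sin (hGamma d i x)


open Real
lemma key_alg (a A b B c C d D e E f F : ℝ)
    (hA : A^2 = a^2+1) (hB : B^2 = b^2+1) (hC : C^2 = c^2+1) (hE : E^2 = e^2+1)
    (hg : A*E*D = B*F*C) :
    b*E*C*((C*D+c*d) - (A*B+a*b)*(E*F+e*f)) + B*e*C*((a*B+A*b)*(e*F+E*f))
    = a*C*E*((E*F+e*f) - (A*B+a*b)*(C*D+c*d)) + A*c*E*((a*B+A*b)*(c*D+C*d)) := by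
  linear_combination (A*b+a*B)*hg + (-b*C*E*(C*D+c*d))*hA + (a*C*E*(E*F+e*f))*hB
    + (A*D*E*(A*b+a*B))*hC + (-B*C*F*(A*b+a*B))*hE

lemma cosh_mul_tanh (x : ℝ) : Real.cosh x * Real.tanh x = Real.sinh x := by
  rw [Real.tanh_eq_sinh_div_cosh, mul_div_cancel₀ _ (Real.cosh_pos x).ne']

lemma star (p q r s t u : ℝ)
    (hg : Real.cosh p * Real.cosh t * Real.cosh s = Real.cosh q * Real.cosh u * Real.cosh r) :
    Real.cosh q * (Real.tanh q * (Real.cosh (r+s) - Real.cosh (p+q) * Real.cosh (t+u))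
        + Real.tanh t * Real.sinh (p+q) * Real.sinh (t+u))
    = Real.cosh p * (Real.tanh p * (Real.cosh (t+u) - Real.cosh (p+q) * Real.cosh (r+s))
        + Real.tanh r * Real.sinh (p+q) * Real.sinh (r+s)) := by
  have h1 := key_alg (sinh p) (cosh p) (sinh q) (cosh q) (sinh r) (cosh r) (sinh s) (cosh s)
    (sinh t) (cosh t) (sinh u) (cosh u) (cosh_sq p) (cosh_sq q) (cosh_sq r) (cosh_sq t) hg
  have hne : Real.cosh t * Real.cosh r ≠ 0 :=
    mul_ne_zero (Real.cosh_pos t).ne' (Real.cosh_pos r).ne'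
  apply mul_left_cancel₀ hne
  simp only [Real.cosh_add, Real.sinh_add]
  linear_combination
    (cosh t * cosh r * ((cosh r * cosh s + sinh r * sinh s)
        - (cosh p * cosh q + sinh p * sinh q) * (cosh t * cosh u + sinh t * sinh u)))
      * cosh_mul_tanh q
    + (cosh r * cosh q * ((sinh p * cosh q + cosh p * sinh q) * (sinh t * cosh u + cosh t * sinh u)))
      * cosh_mul_tanh t
    - (cosh t * cosh r * ((cosh t * cosh u + sinh t * sinh u)
        - (cosh p * cosh q + sinh p * sinh q) * (cosh r * cosh s + sinh r * sinh s)))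
      * cosh_mul_tanh p
    - (cosh t * cosh p * ((sinh p * cosh q + cosh p * sinh q) * (sinh r * cosh s + cosh r * sinh s)))
      * cosh_mul_tanh r
    + h1


lemma compat_perm (d : Fin 3 → Fin 3 → (Fin 3 → ℝ) → ℝ) (x : Fin 3 → ℝ)
    (h : Real.cosh (d 0 1 x) * Real.cosh (d 1 2 x) * Real.cosh (d 2 0 x)
      = Real.cosh (d 1 0 x) * Real.cosh (d 2 1 x) * Real.cosh (d 0 2 x)) :
    ∀ i j k : Fin 3, i ≠ j → j ≠ k → i ≠ k →
      Real.cosh (d i j x) * Real.cosh (d j k x) * Real.cosh (d k i x)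
        = Real.cosh (d j i x) * Real.cosh (d k j x) * Real.cosh (d i k x) := by
  intro i j k hij hjk hik
  fin_cases i <;> fin_cases j <;> fin_cases k <;> simp_all <;>
    first | linear_combination h | linear_combination -h

lemma len_swap (d : Fin 3 → Fin 3 → (Fin 3 → ℝ) → ℝ) (a b : Fin 3) : len d a b = len d b a := by
  funext y; unfold len; ring

lemma other_cases : ∀ i j : Fin 3, i ≠ j →
    ((j = i+1 ∧ other i j = i+2) ∨ (j = i+2 ∧ other i j = i+1)) := by decide

lemma other_comm : ∀ i j : Fin 3, other i j = other j i := by decide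

lemma other_ne : ∀ i j : Fin 3, i ≠ j → i ≠ other i j ∧ j ≠ other i j := by decide

open Real
lemma ratio_lt {a b c : ℝ} (hc : 0 < c) (h1 : c < a + b) (h2 : a < b + c) (h3 : b < a + c) :
    |Real.cosh a * Real.cosh b - Real.cosh c| < Real.sinh a * Real.sinh b := by
  have e1 : Real.cosh c < Real.cosh (a + b) := by
    rw [Real.cosh_lt_cosh, abs_of_pos hc, abs_of_pos (by linarith)]; exact h1
  have e2 : Real.cosh (a - b) < Real.cosh c := by
    rw [Real.cosh_lt_cosh, abs_of_pos hc]
    exact abs_sub_lt_iff.mpr ⟨by linarith, by linarith⟩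
  rw [Real.cosh_add] at e1
  rw [Real.cosh_sub] at e2
  rw [abs_lt]; constructor <;> linarith

lemma pd_gamma (U : Set (Fin 3 → ℝ)) (hUopen : IsOpen U)
    (d : Fin 3 → Fin 3 → (Fin 3 → ℝ) → ℝ)
    (hsmooth : ∀ i j : Fin 3, i ≠ j → ContDiffOn ℝ (⊤ : ℕ∞) (d i j) U)
    (hdep : ∀ i j k : Fin 3, i ≠ j → k ≠ i → k ≠ j → ∀ x ∈ U, pd k (d i j) x = 0)
    (hpos : ∀ i j : Fin 3, i ≠ j → ∀ x ∈ U, 0 < len d i j x)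
    (htri : ∀ i j k : Fin 3, i ≠ j → j ≠ k → i ≠ k → ∀ x ∈ U,
      len d i j x < len d i k x + len d k j x)
    (hconf : ∀ i j : Fin 3, i ≠ j → ∀ x ∈ U, pd i (len d i j) x = Real.tanh (d i j x))
    (x : Fin 3 → ℝ) (hx : x ∈ U) (i j k : Fin 3) (hij : i ≠ j) (hik : i ≠ k) (hjk : j ≠ k)
    (hcase : (j = i+1 ∧ k = i+2) ∨ (j = i+2 ∧ k = i+1)) :
    pd j (hGamma d i) x =
      (Real.tanh (d j i x) * (Real.cosh (len d i k x)
          - Real.cosh (len d i j x) * Real.cosh (len d j k x))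
        + Real.tanh (d j k x) * Real.sinh (len d i j x) * Real.sinh (len d j k x))
      / (Real.sinh (len d i j x) *
          Real.sqrt (1 - Real.cosh (len d i j x)^2 - Real.cosh (len d i k x)^2
            - Real.cosh (len d j k x)^2
            + 2 * (Real.cosh (len d i j x) * Real.cosh (len d i k x)
                * Real.cosh (len d j k x)))) := by
  have hgam : hGamma d i = fun y => Real.arccos
      ((Real.cosh (len d i j y) * Real.cosh (len d i k y) - Real.cosh (len d j k y)) *
        (Real.sinh (len d i j y) * Real.sinh (len d i k y))⁻¹) := by
    rcases hcase with ⟨hj, hk⟩ | ⟨hj, hk⟩ <;> subst hj <;> subst hk <;> funext y <;>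
      unfold hGamma
    · rw [div_eq_mul_inv]
    · rw [div_eq_mul_inv, len_swap d (i+2) (i+1)]
      ring_nf
  -- differentiability
  have hdiff : ∀ a b : Fin 3, a ≠ b → DifferentiableAt ℝ (d a b) x := fun a b hab =>
    (((hsmooth a b hab).contDiffAt (hUopen.mem_nhds hx)).differentiableAt (by simp))
  have Hlen : ∀ a b : Fin 3, a ≠ b →
      HasFDerivAt (len d a b) (fderiv ℝ (d a b) x + fderiv ℝ (d b a) x) x := fun a b hab =>
    ((hdiff a b hab).hasFDerivAt.add (hdiff b a hab.symm).hasFDerivAt)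
  -- directional derivative values
  have v1 : (fderiv ℝ (d i j) x + fderiv ℝ (d j i) x) (Pi.single j 1)
      = Real.tanh (d j i x) := by
    have h := hconf j i hij.symm x hx
    rw [len_swap d j i] at h
    simp only [pd] at h
    rw [(Hlen i j hij).fderiv] at h
    exact h
  have v2 : (fderiv ℝ (d i k) x + fderiv ℝ (d k i) x) (Pi.single j 1) = 0 := by
    have h1 := hdep i k j hik hij.symm hjk x hx
    have h2 := hdep k i j hik.symm hjk hij.symm x hx
    simp only [pd] at h1 h2
    simp [ContinuousLinearMap.add_apply, h1, h2]
  have v3 : (fderiv ℝ (d j k) x + fderiv ℝ (d k j) x) (Pi.single j 1)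
      = Real.tanh (d j k x) := by
    have h := hconf j k hjk x hx
    simp only [pd] at h
    rw [(Hlen j k hjk).fderiv] at h
    exact h
  -- positivity and triangle facts
  have hL3 : 0 < len d j k x := hpos j k hjk x hx
  have htr1 : len d j k x < len d i j x + len d i k x := by
    have h := htri j k i hjk hik.symm hij.symm x hx
    rwa [len_swap d j i] at h
  have htr2 : len d i j x < len d i k x + len d j k x := by
    have h := htri i j k hij hjk hik x hx
    rwa [len_swap d k j] at h
  have htr3 : len d i k x < len d i j x + len d j k x := htri i k j hik hjk.symm hij x hx
  have hS1 : 0 < Real.sinh (len d i j x) := Real.sinh_pos_iff.mpr (hpos i j hij x hx)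
  have hS2 : 0 < Real.sinh (len d i k x) := Real.sinh_pos_iff.mpr (hpos i k hik x hx)
  have hS3 : 0 < Real.sinh (len d j k x) := Real.sinh_pos_iff.mpr hL3
  have hD : 0 < Real.sinh (len d i j x) * Real.sinh (len d i k x) := mul_pos hS1 hS2
  have habs := ratio_lt hL3 htr1 htr2 htr3
  have hN2 : (Real.cosh (len d i j x) * Real.cosh (len d i k x) - Real.cosh (len d j k x))^2
      < (Real.sinh (len d i j x) * Real.sinh (len d i k x))^2 :=
    sq_lt_sq' (by linarith [(abs_lt.1 habs).1]) (abs_lt.1 habs).2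
  have hQD : 1 - Real.cosh (len d i j x)^2 - Real.cosh (len d i k x)^2
        - Real.cosh (len d j k x)^2
        + 2 * (Real.cosh (len d i j x) * Real.cosh (len d i k x) * Real.cosh (len d j k x))
      = (Real.sinh (len d i j x) * Real.sinh (len d i k x))^2
        - (Real.cosh (len d i j x) * Real.cosh (len d i k x) - Real.cosh (len d j k x))^2 := by
    linear_combination (Real.cosh (len d i k x)^2 - 1) * Real.cosh_sq (len d i j x)
      + Real.sinh (len d i j x)^2 * Real.cosh_sq (len d i k x)
  have hQpos : 0 < 1 - Real.cosh (len d i j x)^2 - Real.cosh (len d i k x)^2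
      - Real.cosh (len d j k x)^2
      + 2 * (Real.cosh (len d i j x) * Real.cosh (len d i k x) * Real.cosh (len d j k x)) := by
    rw [hQD]; linarith
  have hsqrtQpos : 0 < Real.sqrt (1 - Real.cosh (len d i j x)^2 - Real.cosh (len d i k x)^2
      - Real.cosh (len d j k x)^2
      + 2 * (Real.cosh (len d i j x) * Real.cosh (len d i k x) * Real.cosh (len d j k x))) :=
    Real.sqrt_pos.mpr hQpos
  -- ratio bounds
  have hrr : (Real.cosh (len d i j x) * Real.cosh (len d i k x) - Real.cosh (len d j k x)) *
      (Real.sinh (len d i j x) * Real.sinh (len d i k x))⁻¹ ∈ Set.Ioo (-1 : ℝ) 1 := by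
    constructor
    · rw [← div_eq_mul_inv, lt_div_iff₀ hD]; linarith [(abs_lt.1 habs).1]
    · rw [← div_eq_mul_inv, div_lt_one hD]; exact (abs_lt.1 habs).2
  have hne1 : (Real.cosh (len d i j x) * Real.cosh (len d i k x) - Real.cosh (len d j k x)) *
      (Real.sinh (len d i j x) * Real.sinh (len d i k x))⁻¹ ≠ -1 := ne_of_gt hrr.1
  have hne2 : (Real.cosh (len d i j x) * Real.cosh (len d i k x) - Real.cosh (len d j k x)) *
      (Real.sinh (len d i j x) * Real.sinh (len d i k x))⁻¹ ≠ 1 := ne_of_lt hrr.2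
  -- derivative assembly
  have hNf := ((Hlen i j hij).cosh.mul (Hlen i k hik).cosh).sub (Hlen j k hjk).cosh
  have hDf := (Hlen i j hij).sinh.mul (Hlen i k hik).sinh
  have hDinv := (hasDerivAt_inv hD.ne').comp_hasFDerivAt x hDf
  have hR := hNf.mul hDinv
  have harc := (Real.hasDerivAt_arccos hne1 hne2).comp_hasFDerivAt x hR
  have harc' : HasFDerivAt (fun y => Real.arccos
      ((Real.cosh (len d i j y) * Real.cosh (len d i k y) - Real.cosh (len d j k y)) *
        (Real.sinh (len d i j y) * Real.sinh (len d i k y))⁻¹)) _ x := harc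
  rw [show pd j (hGamma d i) x = fderiv ℝ (hGamma d i) x (Pi.single j 1) from rfl, hgam,
    harc'.fderiv]
  simp only [ContinuousLinearMap.smul_apply, ContinuousLinearMap.add_apply,
    ContinuousLinearMap.sub_apply, smul_eq_mul]
  simp only [Function.comp_apply] at *
  simp only [ContinuousLinearMap.add_apply] at v1 v2 v3
  rw [v1, v2, v3]
  have hsqv : Real.sqrt (1 -
      ((Real.cosh (len d i j x) * Real.cosh (len d i k x) - Real.cosh (len d j k x)) *
        (Real.sinh (len d i j x) * Real.sinh (len d i k x))⁻¹) ^ 2)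
      = Real.sqrt (1 - Real.cosh (len d i j x)^2 - Real.cosh (len d i k x)^2
          - Real.cosh (len d j k x)^2
          + 2 * (Real.cosh (len d i j x) * Real.cosh (len d i k x) * Real.cosh (len d j k x)))
        / (Real.sinh (len d i j x) * Real.sinh (len d i k x)) := by
    rw [show 1 - ((Real.cosh (len d i j x) * Real.cosh (len d i k x) - Real.cosh (len d j k x)) *
        (Real.sinh (len d i j x) * Real.sinh (len d i k x))⁻¹) ^ 2
      = (1 - Real.cosh (len d i j x)^2 - Real.cosh (len d i k x)^2
          - Real.cosh (len d j k x)^2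
          + 2 * (Real.cosh (len d i j x) * Real.cosh (len d i k x) * Real.cosh (len d j k x)))
        / (Real.sinh (len d i j x) * Real.sinh (len d i k x))^2 from by
      field_simp
      linear_combination hQD - (2*(Real.cosh (len d i k x)^2 - 1)) * Real.cosh_sq (len d i j x)
        - (2*Real.sinh (len d i j x)^2) * Real.cosh_sq (len d i k x)]
    rw [Real.sqrt_div hQpos.le, Real.sqrt_sq hD.le]
  rw [hsqv]
  simp only [Pi.mul_apply, Pi.sub_apply]
  field_simp
  rw [← neg_div]
  congr 1
  linear_combination (Real.sinh (len d i k x) * Real.tanh (d j i x) * Real.cosh (len d i k x))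
    * Real.cosh_sq (len d i j x)

/-- Symmetry of the hyperbolic angle variation in the `u`-coordinates, expressed in the
`f`-coordinates: `cosh(d_ji) ∂γ_i/∂f_j = cosh(d_ij) ∂γ_j/∂f_i`. -/
theorem hyperbolic_angle_variation_symm
    (U : Set (Fin 3 → ℝ)) (hUopen : IsOpen U)
    (d : Fin 3 → Fin 3 → (Fin 3 → ℝ) → ℝ)
    (hsmooth : ∀ i j : Fin 3, i ≠ j → ContDiffOn ℝ (⊤ : ℕ∞) (d i j) U)
    (hdep : ∀ i j k : Fin 3, i ≠ j → k ≠ i → k ≠ j → ∀ x ∈ U, pd k (d i j) x = 0)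
    (hpos : ∀ i j : Fin 3, i ≠ j → ∀ x ∈ U, 0 < len d i j x)
    (htri : ∀ i j k : Fin 3, i ≠ j → j ≠ k → i ≠ k → ∀ x ∈ U,
      len d i j x < len d i k x + len d k j x)
    (hcompat : ∀ x ∈ U,
      Real.cosh (d 0 1 x) * Real.cosh (d 1 2 x) * Real.cosh (d 2 0 x)
        = Real.cosh (d 1 0 x) * Real.cosh (d 2 1 x) * Real.cosh (d 0 2 x))
    (hconf : ∀ i j : Fin 3, i ≠ j → ∀ x ∈ U, pd i (len d i j) x = Real.tanh (d i j x))
    :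
    ∀ x ∈ U, ∀ i j : Fin 3, i ≠ j →
      Real.cosh (d j i x) * pd j (hGamma d i) x
        = Real.cosh (d i j x) * pd i (hGamma d j) x := by
  intro x hx i j hij
  obtain ⟨hine, hjne⟩ := other_ne i j hij
  have hcase2 : (i = j+1 ∧ other i j = j+2) ∨ (i = j+2 ∧ other i j = j+1) := by
    rw [other_comm i j]; exact other_cases j i hij.symm
  have h1 := pd_gamma U hUopen d hsmooth hdep hpos htri hconf x hx i j (other i j)
    hij hine hjne (other_cases i j hij)
  have h2 := pd_gamma U hUopen d hsmooth hdep hpos htri hconf x hx j i (other i j)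
    hij.symm hjne hine hcase2
  have hcp := compat_perm d x (hcompat x hx) i j (other i j) hij hjne hine
  rw [h1, h2, len_swap d j i]
  have hkey : Real.cosh (d j i x) * (Real.tanh (d j i x) * (Real.cosh (len d i (other i j) x)
        - Real.cosh (len d i j x) * Real.cosh (len d j (other i j) x))
      + Real.tanh (d j (other i j) x) * Real.sinh (len d i j x)
          * Real.sinh (len d j (other i j) x))
      = Real.cosh (d i j x) * (Real.tanh (d i j x) * (Real.cosh (len d j (other i j) x)
        - Real.cosh (len d i j x) * Real.cosh (len d i (other i j) x))
      + Real.tanh (d i (other i j) x) * Real.sinh (len d i j x)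
          * Real.sinh (len d i (other i j) x)) := by
    simp only [len]
    exact star (d i j x) (d j i x) (d i (other i j) x) (d (other i j) i x)
      (d j (other i j) x) (d (other i j) j x) hcp
  have hQeq : (1 - Real.cosh (len d i j x)^2 - Real.cosh (len d j (other i j) x)^2
        - Real.cosh (len d i (other i j) x)^2
        + 2 * (Real.cosh (len d i j x) * Real.cosh (len d j (other i j) x)
            * Real.cosh (len d i (other i j) x)))
      = (1 - Real.cosh (len d i j x)^2 - Real.cosh (len d i (other i j) x)^2
        - Real.cosh (len d j (other i j) x)^2
        + 2 * (Real.cosh (len d i j x) * Real.cosh (len d i (other i j) x)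
            * Real.cosh (len d j (other i j) x))) := by ring
  rw [hQeq]
  have hL3 : 0 < len d j (other i j) x := hpos j (other i j) hjne x hx
  have htr1 : len d j (other i j) x < len d i j x + len d i (other i j) x := by
    have h := htri j (other i j) i hjne hine.symm hij.symm x hx
    rwa [len_swap d j i] at h
  have htr2 : len d i j x < len d i (other i j) x + len d j (other i j) x := by
    have h := htri i j (other i j) hij hjne hine x hx
    rwa [len_swap d (other i j) j] at h
  have htr3 : len d i (other i j) x < len d i j x + len d j (other i j) x :=
    htri i (other i j) j hine hjne.symm hij x hx
  have habs := ratio_lt hL3 htr1 htr2 htr3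
  have hS1 : 0 < Real.sinh (len d i j x) := Real.sinh_pos_iff.mpr (hpos i j hij x hx)
  have hS2 : 0 < Real.sinh (len d i (other i j) x) :=
    Real.sinh_pos_iff.mpr (hpos i (other i j) hine x hx)
  have hN2 : (Real.cosh (len d i j x) * Real.cosh (len d i (other i j) x)
        - Real.cosh (len d j (other i j) x))^2
      < (Real.sinh (len d i j x) * Real.sinh (len d i (other i j) x))^2 :=
    sq_lt_sq' (by linarith [(abs_lt.1 habs).1]) (abs_lt.1 habs).2
  have hQpos : 0 < 1 - Real.cosh (len d i j x)^2 - Real.cosh (len d i (other i j) x)^2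
      - Real.cosh (len d j (other i j) x)^2
      + 2 * (Real.cosh (len d i j x) * Real.cosh (len d i (other i j) x)
          * Real.cosh (len d j (other i j) x)) := by
    nlinarith [Real.cosh_sq (len d i j x), Real.cosh_sq (len d i (other i j) x)]
  have hden : 0 < Real.sinh (len d i j x) *
      Real.sqrt (1 - Real.cosh (len d i j x)^2 - Real.cosh (len d i (other i j) x)^2
        - Real.cosh (len d j (other i j) x)^2
        + 2 * (Real.cosh (len d i j x) * Real.cosh (len d i (other i j) x)
            * Real.cosh (len d j (other i j) x))) :=
    mul_pos hS1 (Real.sqrt_pos.mpr hQpos)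
  rw [← mul_div_assoc, ← mul_div_assoc]
  rw [div_eq_div_iff hden.ne' hden.ne']
  rw [hkey]
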